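/- Fix n ≥ 3 and let a ∈ ℤ^{n−3} with S = Σ a_i and N = Σ a_i^2. Then the n-tuples r₊ = (S^2 + N, S^2 + N, −S, a) and r₋ = (−(S+1)^2 − N, −(S+1)^2 − N, −(S+1), a) both satisfy F_n = 0; moreover 1 + s(r₊) > 0 and 1 + s(r₋) < 0, and both r₊ and r₋ are roots: every neighbor of r₊ (respectively r₋) has strictly greater height than r₊ (respectively r₋). -/

import Mathlib

open Finset

def F {n : ℕ} (x : Fin n → ℤ) : ℤ :=
  (∑ i, x i) ^ 2 - (∑ i, x i) - 4 * ∑ i, ∑ j, if i < j then x i * x j else 0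

def nbr {n : ℕ} (a : Fin n → ℤ) (k : Fin n) : Fin n → ℤ :=
  Function.update a k (2 * (∑ i ∈ univ.erase k, a i) + 1 - a k)

def height {n : ℕ} (x : Fin n → ℤ) : ℤ := |1 + ∑ i, x i|

/-- A solution is a root when all of its neighbors have strictly greater height. -/
def IsRoot {n : ℕ} (a : Fin n → ℤ) : Prop := ∀ k, height a < height (nbr a k)

/-! Expanding the square gives `F x = 2 ∑ xᵢ² - s² - s`, so `F r± = 0` only needs the sum and
the sum of squares of `r±`. The `k`-th neighbour of `x` has `1 + s = 3h - 1 - 4 xₖ`, where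
`h = 1 + s(x)`; hence a tuple with `h > 0` is a root once `4 xₖ + 1 < 2h` for all `k`, and one
with `h < 0` once `2h < 4 xₖ + 1`. For `r±` these inequalities come down to `|aⱼ| ≤ aⱼ² ≤ N` and
`S (S + 1) ≥ 0`. -/

theorem sq_sum_eq_sum_sq_add_two_mul_sum_lt {ι R : Type*} [Fintype ι] [LinearOrder ι] [CommRing R]
    (x : ι → R) :
    (∑ i, x i) ^ 2 = ∑ i, x i ^ 2 + 2 * ∑ i, ∑ j, if i < j then x i * x j else 0 := by
  have hsplit : ∀ i j, x i * x j = ((if i < j then x i * x j else 0) +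
      (if j < i then x j * x i else 0)) + if i = j then x i * x j else 0 := by
    intro i j
    rcases lt_trichotomy i j with h | rfl | h
    · simp [h, h.not_gt, h.ne]
    · simp
    · simp [h, h.not_gt, h.ne', mul_comm]
  have hdiag : ∑ i, ∑ j, (if i = j then x i * x j else 0) = ∑ i, x i ^ 2 := by
    simp [sq]
  calc (∑ i, x i) ^ 2 = ∑ i, ∑ j, x i * x j := by rw [sq, sum_mul_sum]
    _ = (∑ i, ∑ j, if i < j then x i * x j else 0) + (∑ i, ∑ j, if j < i then x j * x i else 0)
        + ∑ i, ∑ j, (if i = j then x i * x j else 0) := by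
      simp only [← sum_add_distrib, ← hsplit]
    _ = ∑ i, x i ^ 2 + 2 * ∑ i, ∑ j, if i < j then x i * x j else 0 := by
      rw [sum_comm (f := fun i j => if j < i then x j * x i else 0), hdiag]
      ring

theorem F_eq_two_mul_sum_sq_sub {n : ℕ} (x : Fin n → ℤ) :
    F x = 2 * ∑ i, x i ^ 2 - (∑ i, x i) ^ 2 - ∑ i, x i := by
  rw [F, sq_sum_eq_sum_sq_add_two_mul_sum_lt x]
  ring

theorem one_add_sum_nbr {n : ℕ} (x : Fin n → ℤ) (k : Fin n) :
    1 + ∑ i, nbr x k i = 3 * (1 + ∑ i, x i) - 1 - 4 * x k := by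
  rw [nbr, sum_update_of_mem (mem_univ k), ← erase_eq, sum_erase_eq_sub (mem_univ k)]
  ring

theorem isRoot_of_pos {n : ℕ} {x : Fin n → ℤ} (hpos : 0 < 1 + ∑ i, x i)
    (hsmall : ∀ k, 4 * x k + 1 < 2 * (1 + ∑ i, x i)) : IsRoot x := fun k => by
  rw [height, height, one_add_sum_nbr, abs_of_pos hpos, lt_abs]
  left
  linarith [hsmall k]

theorem isRoot_of_neg {n : ℕ} {x : Fin n → ℤ} (hneg : 1 + ∑ i, x i < 0)
    (hlarge : ∀ k, 2 * (1 + ∑ i, x i) < 4 * x k + 1) : IsRoot x := fun k => by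
  rw [height, height, one_add_sum_nbr, abs_of_neg hneg, lt_abs]
  right
  linarith [hlarge k]

section AppendThree

variable {α : Type*} {d : ℕ} (u v w : α) (a : Fin d → α)

theorem sum_append_three {M : Type*} [AddCommMonoid M] (g : α → M) :
    ∑ k, g (Fin.append ![u, v, w] a k) = g u + g v + g w + ∑ j, g (a j) := by
  rw [Fin.sum_univ_add (f := fun k => g (Fin.append ![u, v, w] a k))]
  simp [Fin.sum_univ_three, add_assoc]

theorem forall_append_three (p : α → Prop) :
    (∀ k : Fin (3 + d), p (Fin.append ![u, v, w] a k)) ↔ p u ∧ p v ∧ p w ∧ ∀ j, p (a j) := by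
  simp [Fin.forall_fin_add, Fin.forall_fin_succ, and_assoc]

end AppendThree

theorem Int.abs_le_self_sq (t : ℤ) : |t| ≤ t ^ 2 :=
  Int.abs_eq_natAbs t ▸ Int.natAbs_le_self_sq t

theorem abs_le_sum_sq {ι : Type*} [Fintype ι] (a : ι → ℤ) (j : ι) : |a j| ≤ ∑ i, a i ^ 2 :=
  (Int.abs_le_self_sq (a j)).trans <| single_le_sum (fun i _ => sq_nonneg (a i)) (mem_univ j)

theorem neg_sum_le_sum_sq {ι : Type*} [Fintype ι] (a : ι → ℤ) : -∑ i, a i ≤ ∑ i, a i ^ 2 := by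
  rw [← sum_neg_distrib]
  exact sum_le_sum fun i _ => (neg_le_abs (a i)).trans (Int.abs_le_self_sq (a i))

def plusRoot {d : ℕ} (a : Fin d → ℤ) : Fin (3 + d) → ℤ :=
  Fin.append ![(∑ i, a i) ^ 2 + ∑ i, a i ^ 2, (∑ i, a i) ^ 2 + ∑ i, a i ^ 2, -∑ i, a i] a

def minusRoot {d : ℕ} (a : Fin d → ℤ) : Fin (3 + d) → ℤ :=
  Fin.append ![-(∑ i, a i + 1) ^ 2 - ∑ i, a i ^ 2, -(∑ i, a i + 1) ^ 2 - ∑ i, a i ^ 2,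
    -(∑ i, a i + 1)] a

section Roots

variable {d : ℕ} (a : Fin d → ℤ)

theorem sum_plusRoot : ∑ k, plusRoot a k = 2 * ((∑ i, a i) ^ 2 + ∑ i, a i ^ 2) := by
  refine (sum_append_three _ _ _ a fun t => t).trans ?_
  ring

theorem sum_sq_plusRoot : ∑ k, plusRoot a k ^ 2 =
    2 * ((∑ i, a i) ^ 2 + ∑ i, a i ^ 2) ^ 2 + (∑ i, a i) ^ 2 + ∑ i, a i ^ 2 := by
  rw [plusRoot, sum_append_three _ _ _ _ (· ^ 2)]
  ring

theorem sum_minusRoot : ∑ k, minusRoot a k = -2 * ((∑ i, a i + 1) ^ 2 + ∑ i, a i ^ 2) - 1 := by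
  refine (sum_append_three _ _ _ a fun t => t).trans ?_
  ring

theorem sum_sq_minusRoot : ∑ k, minusRoot a k ^ 2 =
    2 * ((∑ i, a i + 1) ^ 2 + ∑ i, a i ^ 2) ^ 2 + (∑ i, a i + 1) ^ 2 + ∑ i, a i ^ 2 := by
  rw [minusRoot, sum_append_three _ _ _ _ (· ^ 2)]
  ring

theorem F_plusRoot : F (plusRoot a) = 0 := by
  rw [F_eq_two_mul_sum_sq_sub, sum_plusRoot, sum_sq_plusRoot]
  ring

theorem F_minusRoot : F (minusRoot a) = 0 := by
  rw [F_eq_two_mul_sum_sq_sub, sum_minusRoot, sum_sq_minusRoot]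
  ring

theorem one_add_sum_plusRoot_pos : 0 < 1 + ∑ k, plusRoot a k := by
  rw [sum_plusRoot]
  positivity

theorem one_add_sum_minusRoot_neg : 1 + ∑ k, minusRoot a k < 0 := by
  rw [sum_minusRoot]
  nlinarith [neg_sum_le_sum_sq a, sq_nonneg (2 * ∑ i, a i + 1)]

theorem isRoot_plusRoot : IsRoot (plusRoot a) := by
  refine isRoot_of_pos (one_add_sum_plusRoot_pos a) ?_
  rw [sum_plusRoot]
  have hN : 0 ≤ ∑ i, a i ^ 2 := by positivity
  refine (forall_append_three _ _ _ a fun t => 4 * t + 1 < _).2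
    ⟨by linarith, by linarith, by nlinarith [Int.le_self_sq (-∑ i, a i)], fun j => ?_⟩
  nlinarith [le_abs_self (a j), abs_le_sum_sq a j]

theorem isRoot_minusRoot : IsRoot (minusRoot a) := by
  refine isRoot_of_neg (one_add_sum_minusRoot_neg a) ?_
  rw [sum_minusRoot]
  have hN : 0 ≤ ∑ i, a i ^ 2 := by positivity
  refine (forall_append_three _ _ _ a fun t => _ < 4 * t + 1).2
    ⟨by linarith, by linarith, by nlinarith [Int.le_self_sq (-∑ i, a i)], fun j => ?_⟩
  nlinarith [neg_abs_le (a j), abs_le_sum_sq a j, sq_nonneg (∑ i, a i + 1)]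

end Roots

/-- For any `a ∈ ℤ^{n-3}` (`n = 3 + d ≥ 3`), with `S = Σ aᵢ` and `N = Σ aᵢ²`, the
tuples `r₊ = (S²+N, S²+N, −S, a)` and `r₋ = (−(S+1)²−N, −(S+1)²−N, −(S+1), a)` are,
respectively, a positive and a negative root of `F_n = 0`. -/
theorem stmt_7 (d : ℕ) (a : Fin d → ℤ) :
    F (Fin.append ![(∑ i, a i) ^ 2 + ∑ i, (a i) ^ 2, (∑ i, a i) ^ 2 + ∑ i, (a i) ^ 2,
        -(∑ i, a i)] a) = 0 ∧
    F (Fin.append ![-((∑ i, a i) + 1) ^ 2 - ∑ i, (a i) ^ 2,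
        -((∑ i, a i) + 1) ^ 2 - ∑ i, (a i) ^ 2, -((∑ i, a i) + 1)] a) = 0 ∧
    0 < 1 + ∑ j, (Fin.append ![(∑ i, a i) ^ 2 + ∑ i, (a i) ^ 2,
        (∑ i, a i) ^ 2 + ∑ i, (a i) ^ 2, -(∑ i, a i)] a) j ∧
    1 + ∑ j, (Fin.append ![-((∑ i, a i) + 1) ^ 2 - ∑ i, (a i) ^ 2,
        -((∑ i, a i) + 1) ^ 2 - ∑ i, (a i) ^ 2, -((∑ i, a i) + 1)] a) j < 0 ∧
    IsRoot (Fin.append ![(∑ i, a i) ^ 2 + ∑ i, (a i) ^ 2,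
        (∑ i, a i) ^ 2 + ∑ i, (a i) ^ 2, -(∑ i, a i)] a) ∧
    IsRoot (Fin.append ![-((∑ i, a i) + 1) ^ 2 - ∑ i, (a i) ^ 2,
        -((∑ i, a i) + 1) ^ 2 - ∑ i, (a i) ^ 2, -((∑ i, a i) + 1)] a) :=
  ⟨F_plusRoot a, F_minusRoot a, one_add_sum_plusRoot_pos a, one_add_sum_minusRoot_neg a,
    isRoot_plusRoot a, isRoot_minusRoot a⟩
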